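/- arXiv:math/0701529 — 5 statements merged into one kernel-verified Lean document; each statement's English description precedes it below -/
import Mathlib

section
/- Let A be a finite subset of ℤ^d generating ℤ^d as a group, such that the cone ℝ≥0·A is strongly convex, and let σ be a facet of ℝ≥0·A with primitive integral support function F_σ. Then there exists m ∈ ℕ such that F_σ(ℕA) contains m + ℕ, where ℕA is the monoid generated by A. Consequently, for any set S ⊆ ℤ^d with S + ℕA ⊆ S and S nonempty, there exists m ∈ ℕ such that F_σ(S) ⊇ m + ℕ. -/
open Function

/-- Lattice `ℤ^d`. -/
abbrev Zd (d : ℕ) := Fin d → ℤ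

noncomputable section

namespace SaitoTakahashi

variable {d : ℕ}

/-- The affine semigroup `ℕA` generated by the finite set `A ⊆ ℤ^d`. -/
def NA (A : Finset (Zd d)) : AddSubmonoid (Zd d) := AddSubmonoid.closure (A : Set (Zd d))

/-- The group `ℤA` generated by `A`. -/
def ZA (A : Finset (Zd d)) : AddSubgroup (Zd d) := AddSubgroup.closure (A : Set (Zd d))

/-- Realification of a lattice point. -/
def toR (a : Zd d) : Fin d → ℝ := fun i => (a i : ℝ)

/-- The real cone `ℝ≥0 A`. -/
def coneOf (A : Finset (Zd d)) : Set (Fin d → ℝ) :=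
  { x | ∃ c : Zd d → ℝ, (∀ a, 0 ≤ c a) ∧ x = ∑ a ∈ A, c a • toR a }

/-- The cone `ℝ≥0 A` is strongly convex. -/
def StronglyConvex (A : Finset (Zd d)) : Prop :=
  ∀ x ∈ coneOf A, -x ∈ coneOf A → x = 0

/-- `B = A ∩ τ` for a face `τ` of the cone `ℝ≥0 A`, i.e. `B` is the subset of `A`
cut out by an integral supporting functional which is nonnegative on `A`. -/
def IsFace (A B : Finset (Zd d)) : Prop :=
  ∃ G : Zd d →+ ℤ, B ⊆ A ∧ (∀ a ∈ A, 0 ≤ G a) ∧ ∀ a ∈ A, (G a = 0 ↔ a ∈ B)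

/-- `F` is the primitive integral support function of a facet of `ℝ≥0 A`:
nonnegative on the cone, surjective onto `ℤ` (primitivity, using `ℤA = ℤ^d`),
and its zero set in the cone is a face of dimension `d - 1`. -/
def IsFacetFn (A : Finset (Zd d)) (F : Zd d →+ ℤ) : Prop :=
  (∀ a ∈ A, 0 ≤ F a) ∧ Surjective F ∧
    Module.finrank ℝ ↥(Submodule.span ℝ (toR '' {a : Zd d | a ∈ A ∧ F a = 0})) = d - 1

/-- The set `A ∩ σ` for the facet with primitive integral support function `F`. -/
def facetSet (A : Finset (Zd d)) (F : Zd d →+ ℤ) : Finset (Zd d) :=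
  A.filter fun a => F a = 0

/-- `S` is an `ℕA`-set: `S + ℕA ⊆ S`. -/
def IsNASet (A : Finset (Zd d)) (S : Set (Zd d)) : Prop :=
  ∀ s ∈ S, ∀ a ∈ NA A, s + a ∈ S

/-- `S` is a finitely generated `ℕA`-set. -/
def IsFGNASet (A : Finset (Zd d)) (S : Set (Zd d)) : Prop :=
  IsNASet A S ∧ ∃ G : Finset (Zd d), S = { x | ∃ g ∈ G, ∃ a ∈ NA A, x = g + a }

/-- `S` is scored: `S = ⋂_{σ facet} { a ∈ ℤ^d : F_σ(a) ∈ F_σ(S) }`. -/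
def IsScored (A : Finset (Zd d)) (S : Set (Zd d)) : Prop :=
  S = { x : Zd d | ∀ F : Zd d →+ ℤ, IsFacetFn A F → F x ∈ F '' S }

/-- `S + ℤ(A ∩ τ)` where `B = A ∩ τ`. -/
def plusZ (S : Set (Zd d)) (B : Finset (Zd d)) : Set (Zd d) :=
  { x | ∃ s ∈ S, ∃ z ∈ AddSubgroup.closure (B : Set (Zd d)), x = s + z }

/-- The coset `b + ℤ(A ∩ τ)` where `B = A ∩ τ`. -/
def coset (b : Zd d) (B : Finset (Zd d)) : Set (Zd d) :=
  { x | x - b ∈ AddSubgroup.closure (B : Set (Zd d)) }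

/-- The standard-expression setting of the paper:
`S = S_c \ ⋃ᵢ (bᵢ + ℤ(A∩τᵢ))`, where `S_c` is a finitely generated scored
`ℕA`-set (the scored closure of `S`), `bᵢ ∈ S_c`, the `τᵢ` are faces of `ℝ≥0 A`
(encoded by `Bf i = A ∩ τᵢ`), and `F_σ(S) = F_σ(S_c)` for every facet `σ`. -/
structure Setting (A : Finset (Zd d)) (Sc S : Set (Zd d)) {m : ℕ}
    (b : Fin m → Zd d) (Bf : Fin m → Finset (Zd d)) : Prop where
  latt : ZA A = ⊤
  convex : StronglyConvex A
  fg : IsFGNASet A Sc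
  scored : IsScored A Sc
  bIn : ∀ i, b i ∈ Sc
  face : ∀ i, IsFace A (Bf i)
  expr : S = Sc \ ⋃ i, coset (b i) (Bf i)
  sameF : ∀ F : Zd d →+ ℤ, IsFacetFn A F → F '' S = F '' Sc

/-- The expression `S = S_c \ ⋃ᵢ (bᵢ + ℤ(A∩τᵢ))` is irredundant. -/
def Irredundant (Sc S : Set (Zd d)) {m : ℕ}
    (b : Fin m → Zd d) (Bf : Fin m → Finset (Zd d)) : Prop :=
  ∀ i, Sc \ ⋃ j, ⋃ (_ : j ≠ i), coset (b j) (Bf j) ≠ S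

section Kside

variable (K : Type) [Field K]

/-- A lattice point as a point of `K^d`. -/
def toK (a : Zd d) : Fin d → K := fun i => (a i : K)

/-- The vanishing ideal `𝕀(V) ⊆ K[s₁,…,s_d]` of a subset `V ⊆ K^d`. -/
def vIdeal (V : Set (Fin d → K)) : Ideal (MvPolynomial (Fin d) K) :=
  ⨅ v ∈ V, RingHom.ker (MvPolynomial.eval v)

/-- `Ω_{S,S'}(a) = S \ (−a + S')`. -/
def Omega (S S' : Set (Zd d)) (a : Zd d) : Set (Zd d) := S \ { x | a + x ∈ S' }

/-- The `K`-algebra map `f(s) ↦ f(s − c)`. -/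
def shiftHom (c : Fin d → K) : MvPolynomial (Fin d) K →+* MvPolynomial (Fin d) K :=
  MvPolynomial.eval₂Hom MvPolynomial.C (fun i => MvPolynomial.X i - MvPolynomial.C (c i))

/-- The translate `I + c = { f(s − c) : f ∈ I }` of an ideal of `K[s]`. -/
def shiftIdeal (I : Ideal (MvPolynomial (Fin d) K)) (c : Fin d → K) :
    Ideal (MvPolynomial (Fin d) K) :=
  I.map (shiftHom K c)

/-- The `K`-span `Kτ` of a face, where `B = A ∩ τ`. -/
def spanK (B : Finset (Zd d)) : Submodule K (Fin d → K) :=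
  Submodule.span K (toK K '' (B : Set (Zd d)))

/-- `lam` is (a representative of) an element of `E(S)_τ(α)`:
`lam ∈ Kτ` and `α − lam ∈ S + ℤ(A∩τ)`, where `B = A ∩ τ`. -/
def memE (S : Set (Zd d)) (B : Finset (Zd d)) (α lam : Fin d → K) : Prop :=
  lam ∈ spanK K B ∧
    ∃ s ∈ S, ∃ z ∈ AddSubgroup.closure (B : Set (Zd d)), α - lam = toK K s + toK K z

/-- The `K`-linear extension of an integral linear form `F` to `K^d`. -/
def FK (F : Zd d →+ ℤ) (v : Fin d → K) : K :=
  ∑ i, ((F (Pi.single i 1) : ℤ) : K) * v i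

/-- The affine translate `α + Kτ ⊆ K^d`, where `B = A ∩ τ`. -/
def aff (α : Fin d → K) (B : Finset (Zd d)) : Set (Fin d → K) :=
  { x | ∃ lam ∈ spanK K B, x = α + lam }

end Kside

end SaitoTakahashi

namespace SaitoTakahashi

/-- Numerical-semigroup lemma: a submonoid of `ℤ` containing nonnegative `v` and
`v + 1` contains all sufficiently large naturals. -/
lemma submonoid_cofinite (M : AddSubmonoid ℤ) (v : ℕ) (hu : (v : ℤ) + 1 ∈ M)
    (hv : (v : ℤ) ∈ M) : ∀ k : ℕ, ((v * v + k : ℕ) : ℤ) ∈ M := by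
  intro k
  rcases Nat.eq_zero_or_pos v with h0 | hpos
  · subst h0
    have := AddSubmonoid.nsmul_mem M hu k
    simpa using this
  · set n := v * v + k with hn
    set q := n / v with hq
    set r := n % v with hr
    have hdm : v * q + r = n := Nat.div_add_mod n v
    have hrv : r < v := Nat.mod_lt _ hpos
    have hqv : v ≤ q := by
      rw [hq]
      rw [Nat.le_div_iff_mul_le hpos]
      omega
    have hrq : r ≤ q := le_trans (le_of_lt hrv) hqv
    have key : ((n : ℕ) : ℤ) = (q - r : ℕ) • (v : ℤ) + r • ((v : ℤ) + 1) := by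
      have hcast : (v : ℤ) * q + r = n := by exact_mod_cast hdm
      rw [nsmul_eq_mul, nsmul_eq_mul]
      push_cast [Nat.cast_sub hrq]
      linear_combination -hcast
    rw [key]
    exact M.add_mem (AddSubmonoid.nsmul_mem M hv _) (AddSubmonoid.nsmul_mem M hu _)

/-- Remark 3.1. For a facet `σ` of `ℝ≥0 A` with primitive integral
support function `F_σ`, the set `F_σ(ℕA)` contains `m + ℕ` for some `m ∈ ℕ`;
consequently the same holds for `F_σ(S)` for any nonempty `ℕA`-set `S`. -/
theorem facetFn_image_cofinite {d : ℕ} (A : Finset (Zd d))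
    (hZ : ZA A = ⊤) (hconv : StronglyConvex A)
    (F : Zd d →+ ℤ) (hF : IsFacetFn A F) :
    (∃ m : ℕ, ∀ k : ℕ, ((m + k : ℕ) : ℤ) ∈ F '' (NA A : Set (Zd d))) ∧
    (∀ S : Set (Zd d), S.Nonempty → IsNASet A S →
      ∃ m : ℕ, ∀ k : ℕ, ((m + k : ℕ) : ℤ) ∈ F '' S) := by
  obtain ⟨hFA, hsurj, -⟩ := hF
  set M : AddSubmonoid ℤ := AddSubmonoid.closure (F '' (A : Set (Zd d))) with hMdef
  -- the image of ℕA under F is M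
  have himg : F '' ((NA A : AddSubmonoid (Zd d)) : Set (Zd d)) = (M : Set ℤ) := by
    rw [hMdef, ← AddMonoidHom.map_mclosure]
    rfl
  -- all elements of M are nonnegative
  have hMnn : ∀ x ∈ M, 0 ≤ x := by
    intro x hx
    induction hx using AddSubmonoid.closure_induction with
    | mem y hy =>
      obtain ⟨a, ha, rfl⟩ := hy
      exact hFA a ha
    | zero => exact le_refl 0
    | add a b _ _ ha hb => exact add_nonneg ha hb
  -- the subgroup generated by F '' A is all of ℤ
  have hgrp : AddSubgroup.closure (F '' (A : Set (Zd d))) = ⊤ := by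
    rw [← AddMonoidHom.map_closure]
    show AddSubgroup.map F (ZA A) = ⊤
    rw [hZ, ← AddMonoidHom.range_eq_map]
    exact F.range_eq_top_of_surjective hsurj
  -- hence 1 = u - v with u, v ∈ M
  have h1 : (1 : ℤ) ∈ AddSubgroup.closure (F '' (A : Set (Zd d))) := by
    rw [hgrp]; trivial
  have hdiff : ∀ x : ℤ, x ∈ AddSubgroup.closure (F '' (A : Set (Zd d))) →
      ∃ u ∈ M, ∃ w ∈ M, x = u - w := by
    intro x hx
    induction hx using AddSubgroup.closure_induction with
    | mem y hy =>
      exact ⟨y, AddSubmonoid.subset_closure hy, 0, M.zero_mem, by ring⟩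
    | zero => exact ⟨0, M.zero_mem, 0, M.zero_mem, by ring⟩
    | add a b _ _ ha hb =>
      obtain ⟨u1, hu1, w1, hw1, rfl⟩ := ha
      obtain ⟨u2, hu2, w2, hw2, rfl⟩ := hb
      exact ⟨u1 + u2, M.add_mem hu1 hu2, w1 + w2, M.add_mem hw1 hw2, by ring⟩
    | neg a _ ha =>
      obtain ⟨u1, hu1, w1, hw1, rfl⟩ := ha
      exact ⟨w1, hw1, u1, hu1, by ring⟩
  obtain ⟨u, hu, w, hw, huw⟩ := hdiff 1 h1
  lift w to ℕ using hMnn w hw with v hv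
  have hu' : ((v : ℤ) + 1) ∈ M := by
    have : u = (v : ℤ) + 1 := by omega
    rwa [this] at hu
  have hmain : ∀ k : ℕ, ((v * v + k : ℕ) : ℤ) ∈ M := submonoid_cofinite M v hu' hw
  have part1 : ∀ k : ℕ, ((v * v + k : ℕ) : ℤ) ∈ F '' ((NA A : AddSubmonoid (Zd d)) : Set (Zd d)) := by
    intro k
    rw [himg]
    exact hmain k
  refine ⟨⟨v * v, part1⟩, ?_⟩
  rintro S ⟨s, hs⟩ hNAS
  refine ⟨v * v + (F s).natAbs, fun k => ?_⟩
  set j : ℕ := (((F s).natAbs : ℤ) + k - F s).toNat with hjdef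
  have hj : (j : ℤ) = ((F s).natAbs : ℤ) + k - F s := by
    rw [hjdef, Int.toNat_of_nonneg]
    have := Int.le_natAbs (a := F s)
    omega
  obtain ⟨a, ha, hfa⟩ := part1 j
  refine ⟨s + a, hNAS s hs a ha, ?_⟩
  rw [map_add, hfa]
  omega

end SaitoTakahashi
end
end

section
/- Let S_c be a scored finitely generated ℕA-set and let S = S_c \ ⋃_{i=1}^m (b_i + ℤ(A∩τ_i)) with b_i ∈ S_c, faces τ_i of ℝ≥0·A, and F_σ(S) = F_σ(S_c) for all facets σ. Fix M ∈ ℕ with M > max(F_σ(S_c)^c ∪ {F_σ(b_i)}) − min(F_σ(S_c) ∪ {F_σ(b_i)}) for all facets σ. For a face τ of ℝ≥0·A, define the set N°°(τ) = { a ∈ ℕ(A∩τ) : F_σ(a) ≥ M for all facets σ not containing τ }. Then S + N°°(τ) ⊆ S. -/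
open Function

noncomputable section

namespace SaitoTakahashi


section Aux

variable {d : ℕ}

/-! ### Auxiliary linear-algebra material for the facet construction -/

/-- Integral linear form with coefficients `c`. -/
def intFn (c : Fin d → ℤ) : Zd d →+ ℤ where
  toFun x := ∑ i, c i * x i
  map_zero' := by simp
  map_add' x y := by simp [mul_add, Finset.sum_add_distrib]

/-- Real linear form with integral coefficients `c`. -/
def realFn (c : Fin d → ℤ) : (Fin d → ℝ) →ₗ[ℝ] ℝ where
  toFun v := ∑ i, (c i : ℝ) * v i
  map_add' x y := by simp [mul_add, Finset.sum_add_distrib]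
  map_smul' r v := by
    simp only [Finset.mul_sum, smul_eq_mul, RingHom.id_apply, Pi.smul_apply]
    exact Finset.sum_congr rfl fun i _ => by ring

theorem realFn_toR (c : Fin d → ℤ) (a : Zd d) :
    realFn c (toR a) = ((intFn c a : ℤ) : ℝ) := by
  simp [realFn, intFn, toR]

theorem intFn_apply (c : Fin d → ℤ) (x : Zd d) : intFn c x = ∑ i, c i * x i := rfl

theorem realFn_single (c : Fin d → ℤ) (i : Fin d) :
    realFn c (Pi.single i (1:ℝ)) = (c i : ℝ) := by
  simp only [realFn, LinearMap.coe_mk, AddHom.coe_mk]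
  rw [Finset.sum_eq_single i]
  · simp
  · intro j _ hj
    simp [Pi.single_apply, hj]
  · simp

theorem eq_intFn (F : Zd d →+ ℤ) (x : Zd d) :
    F x = intFn (fun i => F (Pi.single i 1)) x := by
  have hx : x = ∑ i, Pi.single i (x i) := by rw [Finset.univ_sum_single]
  rw [intFn]
  simp only [AddMonoidHom.coe_mk, ZeroHom.coe_mk]
  conv_lhs => rw [hx]
  rw [map_sum]
  congr 1; funext i
  have : Pi.single i (x i) = (x i) • (Pi.single i (1:ℤ) : Zd d) := by
    funext j; by_cases h : j = i <;> simp [Pi.single_apply, h]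
  rw [this, map_zsmul]; simp [mul_comm]

/-- `toR` as an additive homomorphism. -/
def toRHom : Zd d →+ (Fin d → ℝ) where
  toFun := toR
  map_zero' := by funext i; simp [toR]
  map_add' x y := by funext i; simp [toR]

theorem top_of_singles (p : Submodule ℝ (Fin d → ℝ))
    (h : ∀ i, Pi.single i (1:ℝ) ∈ p) : p = ⊤ := by
  rw [eq_top_iff]
  intro v _
  have hv : v = ∑ i, v i • (Pi.single i (1:ℝ) : Fin d → ℝ) := by
    funext j
    simp [Pi.single_apply]
  rw [hv]
  exact Submodule.sum_mem _ fun i _ => Submodule.smul_mem _ _ (h i)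

theorem span_top (A : Finset (Zd d)) (h : ZA A = ⊤) :
    Submodule.span ℝ (toR '' (A : Set (Zd d))) = ⊤ := by
  have key : ∀ x : Zd d, toR x ∈ Submodule.span ℝ (toR '' (A : Set (Zd d))) := by
    intro x
    have hx : x ∈ AddSubgroup.closure (A : Set (Zd d)) := by
      rw [show AddSubgroup.closure (A : Set (Zd d)) = ZA A from rfl, h]; trivial
    have hle : AddSubgroup.closure (A : Set (Zd d)) ≤
        (Submodule.span ℝ (toR '' (A : Set (Zd d)))).toAddSubgroup.comap (toRHom (d := d)) := by
      apply AddSubgroup.closure_le _ |>.2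
      intro a ha
      exact Submodule.subset_span ⟨a, ha, rfl⟩
    exact hle hx
  apply top_of_singles
  intro i
  have := key (Pi.single i 1)
  have heq : toR (Pi.single i (1:ℤ)) = Pi.single i (1:ℝ) := by
    funext j; by_cases hj : j = i <;> simp [toR, Pi.single_apply, hj]
  rwa [heq] at this

theorem dual_vanish {K : Type*} [Field K] {V : Type*} [AddCommGroup V] [Module K V]
    (p : Submodule K V) (hp : p < ⊤) :
    ∃ f : Module.Dual K V, f ≠ 0 ∧ ∀ x ∈ p, f x = 0 := by
  obtain ⟨f, hf, hf2⟩ := Submodule.exists_dual_map_eq_bot_of_lt_top hp inferInstance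
  exact ⟨f, hf, fun x hx => by
    have : f x ∈ p.map f := ⟨x, hx, rfl⟩
    simpa [hf2] using this⟩

/-- zero set of `h` on `A`, spanned. -/
def zspan (A : Finset (Zd d)) (h : (Fin d → ℝ) →ₗ[ℝ] ℝ) : Submodule ℝ (Fin d → ℝ) :=
  Submodule.span ℝ (toR '' {a : Zd d | a ∈ A ∧ h (toR a) = 0})

theorem zspan_le_ker (A : Finset (Zd d)) (h : (Fin d → ℝ) →ₗ[ℝ] ℝ) :
    zspan A h ≤ LinearMap.ker h := by
  rw [zspan, Submodule.span_le]
  rintro - ⟨a, ⟨-, ha0⟩, rfl⟩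
  simpa [LinearMap.mem_ker] using ha0

theorem finrank_ker (h : (Fin d → ℝ) →ₗ[ℝ] ℝ) (hne : h ≠ 0) :
    Module.finrank ℝ (LinearMap.ker h) = d - 1 := by
  obtain ⟨v, hv⟩ : ∃ v, h v ≠ 0 := by
    by_contra hall
    push_neg at hall
    exact hne (LinearMap.ext fun v => by simpa using hall v)
  have hsurj : LinearMap.range h = ⊤ := by
    rw [eq_top_iff]
    intro r _
    exact ⟨(r / h v) • v, by simp only [map_smul, smul_eq_mul]; field_simp⟩
  have hrn := LinearMap.finrank_range_add_finrank_ker h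
  rw [hsurj, finrank_top, Module.finrank_self] at hrn
  have hd : Module.finrank ℝ (Fin d → ℝ) = d := by simp
  omega

theorem finrank_zspan_le (A : Finset (Zd d)) (h : (Fin d → ℝ) →ₗ[ℝ] ℝ)
    (a₀ : Zd d) (hpos : 0 < h (toR a₀)) :
    Module.finrank ℝ (zspan A h) ≤ d - 1 := by
  have hne : h ≠ 0 := by
    intro h0; rw [h0] at hpos; simp at hpos
  calc Module.finrank ℝ (zspan A h) ≤ Module.finrank ℝ (LinearMap.ker h) :=
        Submodule.finrank_mono (zspan_le_ker A h)
    _ = d - 1 := finrank_ker h hne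

/-- Core geometric induction: starting from a supporting functional positive at `a₀`, produce a
supporting functional positive at `a₀`, vanishing wherever the original does, whose zero set on
`A` spans a hyperplane. -/
theorem lemmaA (A : Finset (Zd d))
    (hspan : Submodule.span ℝ (toR '' (A : Set (Zd d))) = ⊤)
    (a₀ : Zd d) (ha₀ : a₀ ∈ A) :
    ∀ n : ℕ, ∀ h : (Fin d → ℝ) →ₗ[ℝ] ℝ,
      (∀ a ∈ A, 0 ≤ h (toR a)) → 0 < h (toR a₀) →
      d - 1 - Module.finrank ℝ (zspan A h) ≤ n →
      ∃ e : (Fin d → ℝ) →ₗ[ℝ] ℝ,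
        (∀ a ∈ A, 0 ≤ e (toR a)) ∧ 0 < e (toR a₀) ∧
        (∀ a ∈ A, h (toR a) = 0 → e (toR a) = 0) ∧
        Module.finrank ℝ (zspan A e) = d - 1 := by
  intro n
  induction n with
  | zero =>
    intro h hpos ha₀pos hn
    refine ⟨h, hpos, ha₀pos, fun a _ h0 => h0, ?_⟩
    have := finrank_zspan_le A h a₀ ha₀pos
    omega
  | succ n ih =>
    intro h hpos ha₀pos hn
    classical
    set k := Module.finrank ℝ (zspan A h) with hk
    have hkle := finrank_zspan_le A h a₀ ha₀pos
    by_cases hcase : k = d - 1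
    · exact ⟨h, hpos, ha₀pos, fun a _ h0 => h0, hcase⟩
    have hklt : k < d - 1 := lt_of_le_of_ne hkle hcase
    set W := zspan A h with hW
    set U := W ⊔ Submodule.span ℝ {toR a₀} with hU
    have hUlt : U < ⊤ := by
      apply Submodule.lt_top_of_finrank_lt_finrank
      have h1 : Module.finrank ℝ U ≤ k + Module.finrank ℝ (Submodule.span ℝ {toR a₀}) :=
        Submodule.finrank_add_le_finrank_add_finrank _ _
      have h2 : Module.finrank ℝ (Submodule.span ℝ ({toR a₀} : Set (Fin d → ℝ))) = 1 := by
        apply finrank_span_singleton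
        intro h0
        rw [h0] at ha₀pos; simp at ha₀pos
      have hd : Module.finrank ℝ (Fin d → ℝ) = d := by simp
      omega
    obtain ⟨g, hg0, hgvan⟩ := dual_vanish U hUlt
    have hga₀ : g (toR a₀) = 0 :=
      hgvan _ (le_sup_right (α := Submodule ℝ (Fin d → ℝ)) (Submodule.mem_span_singleton_self _))
    have hgW : ∀ x ∈ W, g x = 0 := fun x hx =>
      hgvan x (le_sup_left (α := Submodule ℝ (Fin d → ℝ)) hx)
    have hgz : ∀ a ∈ A, h (toR a) = 0 → g (toR a) = 0 := fun a ha h0 =>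
      hgW _ (Submodule.subset_span ⟨a, ⟨ha, h0⟩, rfl⟩)
    have step : ∀ g' : Module.Dual ℝ (Fin d → ℝ),
        (∀ a ∈ A, h (toR a) = 0 → g' (toR a) = 0) → g' (toR a₀) = 0 →
        (A.filter (fun a => 0 < h (toR a) ∧ g' (toR a) < 0)).Nonempty →
        ∃ e, (∀ a ∈ A, 0 ≤ e (toR a)) ∧ 0 < e (toR a₀) ∧
          (∀ a ∈ A, h (toR a) = 0 → e (toR a) = 0) ∧
          Module.finrank ℝ (zspan A e) = d - 1 := by
      intro g' hg'z hg'a₀ hT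
      obtain ⟨a', ha'T, ha'min⟩ := Finset.exists_min_image _
        (fun a => h (toR a) / (-g' (toR a))) hT
      rw [Finset.mem_filter] at ha'T
      obtain ⟨ha'A, ha'h, ha'g⟩ := ha'T
      set t := h (toR a') / (-g' (toR a')) with htdef
      have htpos : 0 < t := div_pos ha'h (by linarith)
      set h' := h + t • g' with hh'
      have hh'app : ∀ v, h' v = h v + t * g' v := fun v => rfl
      have hz' : ∀ a ∈ A, h (toR a) = 0 → h' (toR a) = 0 := by
        intro a ha h0
        rw [hh'app, h0, hg'z a ha h0]; ring
      have hpos' : ∀ a ∈ A, 0 ≤ h' (toR a) := by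
        intro a ha
        rcases eq_or_lt_of_le (hpos a ha) with h0 | hpos0
        · rw [hz' a ha h0.symm]
        · rw [hh'app]
          rcases le_or_gt 0 (g' (toR a)) with hge | hlt
          · nlinarith
          · have haT : a ∈ A.filter (fun a => 0 < h (toR a) ∧ g' (toR a) < 0) :=
              Finset.mem_filter.2 ⟨ha, hpos0, hlt⟩
            have := ha'min a haT
            have h1 : t * (-g' (toR a)) ≤ h (toR a) :=
              (le_div_iff₀ (by linarith)).1 this
            linarith
      have ha₀' : 0 < h' (toR a₀) := by rw [hh'app, hg'a₀]; simpa using ha₀pos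
      have ha'z : h' (toR a') = 0 := by
        have hne : g' (toR a') ≠ 0 := ne_of_lt ha'g
        have hne' : -g' (toR a') ≠ 0 := by simpa using hne
        rw [hh'app, htdef]
        field_simp
        ring
      have hdim : k + 1 ≤ Module.finrank ℝ (zspan A h') := by
        have hWle : W ≤ zspan A h' := by
          rw [hW, zspan, Submodule.span_le]
          rintro - ⟨a, ⟨ha, h0⟩, rfl⟩
          exact Submodule.subset_span ⟨a, ⟨ha, hz' a ha h0⟩, rfl⟩
        have ha'mem : toR a' ∈ zspan A h' :=
          Submodule.subset_span ⟨a', ⟨ha'A, ha'z⟩, rfl⟩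
        have ha'notW : toR a' ∉ W := by
          intro hmem
          have := zspan_le_ker A h hmem
          rw [LinearMap.mem_ker] at this
          rw [this] at ha'h
          exact lt_irrefl 0 ha'h
        have hlt : W < W ⊔ Submodule.span ℝ {toR a'} := by
          refine lt_of_le_of_ne le_sup_left ?_
          intro heq
          apply ha'notW
          rw [heq]
          exact le_sup_right (α := Submodule ℝ (Fin d → ℝ)) (Submodule.mem_span_singleton_self _)
        have h1 : k < Module.finrank ℝ (W ⊔ Submodule.span ℝ {toR a'} : Submodule ℝ (Fin d → ℝ)) :=
          Submodule.finrank_lt_finrank_of_lt hlt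
        have h2 : (W ⊔ Submodule.span ℝ {toR a'}) ≤ zspan A h' := by
          refine sup_le hWle ?_
          rw [Submodule.span_le, Set.singleton_subset_iff]
          exact ha'mem
        have := Submodule.finrank_mono h2
        omega
      obtain ⟨e, he1, he2, he3, he4⟩ := ih h' hpos' ha₀' (by omega)
      exact ⟨e, he1, he2, fun a ha h0 => he3 a ha (hz' a ha h0), he4⟩
    by_cases hT : (A.filter (fun a => 0 < h (toR a) ∧ g (toR a) < 0)).Nonempty
    · exact step g hgz hga₀ hT
    by_cases hT' : (A.filter (fun a => 0 < h (toR a) ∧ (-g) (toR a) < 0)).Nonempty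
    · exact step (-g) (fun a ha h0 => by simp [hgz a ha h0]) (by simp [hga₀]) hT'
    · exfalso
      apply hg0
      have hallz : ∀ a ∈ A, g (toR a) = 0 := by
        intro a ha
        rcases eq_or_lt_of_le (hpos a ha) with h0 | hpos0
        · exact hgz a ha h0.symm
        · by_contra hne
          rcases lt_or_gt_of_ne hne with hlt | hgt
          · exact hT ⟨a, Finset.mem_filter.2 ⟨ha, hpos0, hlt⟩⟩
          · exact hT' ⟨a, Finset.mem_filter.2 ⟨ha, hpos0, by simpa using hgt⟩⟩
      have hker : LinearMap.ker g = ⊤ := by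
        rw [eq_top_iff, ← hspan, Submodule.span_le]
        rintro - ⟨a, ha, rfl⟩
        simpa [LinearMap.mem_ker] using hallz a ha
      refine LinearMap.ext fun v => ?_
      have hv : v ∈ LinearMap.ker g := hker ▸ Submodule.mem_top
      simpa [LinearMap.mem_ker] using hv

/-! ### Rationality: from a real facet functional to a primitive integral one -/

def toQ (a : Zd d) : Fin d → ℚ := fun i => (a i : ℚ)

def jQR : (Fin d → ℚ) →ₗ[ℚ] (Fin d → ℝ) where
  toFun v := fun i => (v i : ℝ)
  map_add' x y := by funext i; simp
  map_smul' q v := by funext i; simp [Rat.smul_def]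

theorem jQR_toQ (a : Zd d) : jQR (toQ a) = toR a := by
  funext i; simp [jQR, toQ, toR]

theorem jQR_single (i : Fin d) : jQR (Pi.single i (1:ℚ)) = Pi.single i (1:ℝ) := by
  funext j; rcases eq_or_ne j i with h | h <;> simp [jQR, Pi.single_apply, h]

theorem dual_eq_sum {K : Type*} [Field K] (φ : Module.Dual K (Fin d → K)) (x : Fin d → K) :
    φ x = ∑ i, x i * φ (Pi.single i 1) := by
  have hx : x = ∑ i, Pi.single i (x i) := by rw [Finset.univ_sum_single]
  conv_lhs => rw [hx]
  rw [map_sum]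
  refine Finset.sum_congr rfl fun i _ => ?_
  have : Pi.single i (x i) = (x i) • (Pi.single i (1:K) : Fin d → K) := by
    funext j; rcases eq_or_ne j i with h | h <;> simp [Pi.single_apply, h]
  rw [this, map_smul, smul_eq_mul]

set_option maxHeartbeats 1000000 in
/-- **Facet existence**: given a face functional `G` and a generator `a₀` outside the face,
there is a primitive integral facet functional vanishing on the face and nonzero at `a₀`. -/
theorem exists_facetFn (A : Finset (Zd d)) (hlatt : ZA A = ⊤)
    (G : Zd d →+ ℤ) (hGpos : ∀ a ∈ A, 0 ≤ G a)
    (a₀ : Zd d) (ha₀ : a₀ ∈ A) (ha₀ne : G a₀ ≠ 0) :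
    ∃ F : Zd d →+ ℤ, IsFacetFn A F ∧ (∀ a ∈ A, G a = 0 → F a = 0) ∧ F a₀ ≠ 0 := by
  classical
  rcases Nat.eq_zero_or_pos d with hd0 | hdpos
  · exfalso
    apply ha₀ne
    subst hd0
    have : a₀ = 0 := Subsingleton.elim _ _
    rw [this, map_zero]
  have hspan := span_top A hlatt
  set h : (Fin d → ℝ) →ₗ[ℝ] ℝ := realFn (fun i => G (Pi.single i 1)) with hhdef
  have hG : ∀ a : Zd d, h (toR a) = ((G a : ℤ) : ℝ) := by
    intro a
    rw [hhdef, realFn_toR]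
    norm_cast
    exact (eq_intFn G a).symm
  have hpos : ∀ a ∈ A, 0 ≤ h (toR a) := by
    intro a ha; rw [hG]; exact_mod_cast hGpos a ha
  have ha₀pos : 0 < h (toR a₀) := by
    rw [hG]
    have := hGpos a₀ ha₀
    have h1 : 0 < G a₀ := lt_of_le_of_ne this (Ne.symm ha₀ne)
    exact_mod_cast h1
  obtain ⟨e, he1, he2, he3, he4⟩ := lemmaA A hspan a₀ ha₀ d h hpos ha₀pos (by omega)
  set Zset := {a : Zd d | a ∈ A ∧ e (toR a) = 0} with hZset
  -- ℚ-side: vanishing rational functional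
  set pQ := Submodule.span ℚ (toQ '' Zset) with hpQ
  have hpQlt : pQ < ⊤ := by
    rw [lt_top_iff_ne_top]
    intro htop
    have hsingle : ∀ i : Fin d, Pi.single i (1:ℝ) ∈ zspan A e := by
      intro i
      have h1 : (Pi.single i (1:ℚ) : Fin d → ℚ) ∈ pQ := htop ▸ Submodule.mem_top
      have h2 : jQR (Pi.single i (1:ℚ)) ∈ pQ.map jQR := Submodule.mem_map_of_mem h1
      rw [hpQ, Submodule.map_span] at h2
      have himg : jQR '' (toQ '' Zset) = toR '' Zset := by
        rw [Set.image_image]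
        exact Set.image_congr fun a _ => jQR_toQ a
      rw [himg, jQR_single] at h2
      have h4 : Submodule.span ℚ (toR '' Zset) ≤ (zspan A e).restrictScalars ℚ :=
        Submodule.span_le.2 Submodule.subset_span
      exact h4 h2
    have htop2 : zspan A e = ⊤ := top_of_singles _ hsingle
    rw [htop2, finrank_top] at he4
    have hd : Module.finrank ℝ (Fin d → ℝ) = d := by simp
    omega
  obtain ⟨φ, hφne, hφvan⟩ := dual_vanish pQ hpQlt
  -- integral coefficients
  set N : ℤ := ∏ i, ((φ (Pi.single i 1)).den : ℤ) with hN
  have hNpos : 0 < N := Finset.prod_pos fun i _ => by positivity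
  set c1 : Fin d → ℤ := fun i => (N / ((φ (Pi.single i 1)).den : ℤ)) * (φ (Pi.single i 1)).num
    with hc1def
  have hc1 : ∀ i, ((c1 i : ℤ) : ℚ) = (N : ℚ) * φ (Pi.single i 1) := by
    intro i
    set q := φ (Pi.single i 1) with hq
    have hdvd : ((q.den : ℤ)) ∣ N := Finset.dvd_prod_of_mem _ (Finset.mem_univ i)
    obtain ⟨m, hm⟩ := hdvd
    have hden : ((q.den : ℤ)) ≠ 0 := by exact_mod_cast q.den_nz
    have hdiv : N / (q.den : ℤ) = m := by rw [hm, Int.mul_ediv_cancel_left _ hden]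
    rw [hc1def]
    simp only [← hq, hdiv]
    push_cast
    rw [hm]
    push_cast
    have : (q.num : ℚ) = q * (q.den : ℚ) := by
      rw [Rat.mul_den_eq_num]
    rw [this]
    ring
  have hφsingle : ∃ i, φ (Pi.single i 1) ≠ 0 := by
    by_contra hall
    push_neg at hall
    apply hφne
    refine LinearMap.ext fun x => ?_
    rw [dual_eq_sum]
    simp [hall]
  obtain ⟨i₀, hi₀⟩ := hφsingle
  have hc1i₀ : c1 i₀ ≠ 0 := by
    intro h0
    have := hc1 i₀
    rw [h0] at this
    simp only [Int.cast_zero] at this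
    have hN0 : (N : ℚ) ≠ 0 := by exact_mod_cast hNpos.ne'
    exact hi₀ (by
      rcases mul_eq_zero.1 this.symm with h | h
      · exact absurd h hN0
      · exact h)
  clear_value N
  have hF1Z : ∀ a ∈ Zset, intFn c1 a = 0 := by
    intro a ha
    have hmem : toQ a ∈ pQ := Submodule.subset_span ⟨a, ha, rfl⟩
    have hzero : φ (toQ a) = 0 := hφvan _ hmem
    have hcast : ((intFn c1 a : ℤ) : ℚ) = (N : ℚ) * φ (toQ a) := by
      rw [dual_eq_sum φ (toQ a), intFn_apply, Finset.mul_sum, Int.cast_sum]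
      refine Finset.sum_congr rfl fun i _ => ?_
      rw [Int.cast_mul, hc1 i]
      show (N:ℚ) * φ (Pi.single i 1) * ((a i : ℤ) : ℚ) = (N:ℚ) * (toQ a i * φ (Pi.single i 1))
      rw [show toQ a i = ((a i : ℤ) : ℚ) from rfl]
      ring
    rw [hzero, mul_zero] at hcast
    exact_mod_cast hcast
  -- kernel identification for realFn c1
  have hkere : LinearMap.ker e = zspan A e := by
    have hne : e ≠ 0 := by
      intro h0; rw [h0] at he2; simp at he2
    have hle : zspan A e ≤ LinearMap.ker e := zspan_le_ker A e
    exact (Submodule.eq_of_le_of_finrank_le hle (by rw [he4, finrank_ker e hne])).symm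
  have ha₀notin : toR a₀ ∉ zspan A e := by
    rw [← hkere, LinearMap.mem_ker]
    intro h0; rw [h0] at he2; exact lt_irrefl 0 he2
  have hker1 : LinearMap.ker (realFn c1) = zspan A e := by
    have hne : realFn c1 ≠ 0 := by
      intro h0
      have := realFn_single c1 i₀
      rw [h0] at this
      simp only [LinearMap.zero_apply] at this
      exact hc1i₀ (by exact_mod_cast this.symm)
    have hle : zspan A e ≤ LinearMap.ker (realFn c1) := by
      rw [zspan, Submodule.span_le]
      rintro - ⟨a, ha, rfl⟩
      rw [SetLike.mem_coe, LinearMap.mem_ker, realFn_toR, hF1Z a ha, Int.cast_zero]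
    exact (Submodule.eq_of_le_of_finrank_le hle (by rw [he4, finrank_ker _ hne])).symm
  have hr1ne : realFn c1 (toR a₀) ≠ 0 := by
    intro h0
    exact ha₀notin (hker1 ▸ (LinearMap.mem_ker.2 h0))
  clear_value c1
  -- sign normalization
  obtain ⟨c2, hc2Z, hc2i₀, hc2a₀⟩ : ∃ c2 : Fin d → ℤ, (∀ a ∈ Zset, intFn c2 a = 0) ∧
      (c2 i₀ ≠ 0) ∧ 0 < realFn c2 (toR a₀) := by
    rcases lt_or_gt_of_ne hr1ne with hlt | hgt
    · refine ⟨fun i => -(c1 i), ?_, by simpa using hc1i₀, ?_⟩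
      · intro a ha
        have h1 : intFn (fun i => -(c1 i)) a = -(intFn c1 a) := by
          rw [intFn_apply, intFn_apply, ← Finset.sum_neg_distrib]
          exact Finset.sum_congr rfl fun i _ => by ring
        rw [h1, hF1Z a ha, neg_zero]
      · have h1 : realFn (fun i => -(c1 i)) (toR a₀) = -(realFn c1 (toR a₀)) := by
          show (∑ i, ((-(c1 i) : ℤ) : ℝ) * toR a₀ i) = -(∑ i, ((c1 i : ℤ) : ℝ) * toR a₀ i)
          rw [← Finset.sum_neg_distrib]
          exact Finset.sum_congr rfl fun i _ => by push_cast; ring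
        rw [h1]
        linarith
    · exact ⟨c1, hF1Z, hc1i₀, hgt⟩
  set g0 : ℤ := Finset.univ.gcd c2 with hg0def
  have hg0dvd : ∀ i, g0 ∣ c2 i := fun i => Finset.gcd_dvd (Finset.mem_univ i)
  have hg0ne : g0 ≠ 0 := by
    intro h0
    rw [hg0def, Finset.gcd_eq_zero_iff] at h0
    exact hc2i₀ (h0 i₀ (Finset.mem_univ i₀))
  have hg0pos : 0 < g0 := by
    have h1 : |g0| = g0 := by
      rw [Int.abs_eq_normalize, hg0def]
      exact Finset.normalize_gcd
    have h2 : 0 ≤ g0 := h1 ▸ abs_nonneg g0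
    exact lt_of_le_of_ne h2 (Ne.symm hg0ne)
  set c : Fin d → ℤ := fun i => c2 i / g0 with hcdef
  have hc2eq : ∀ i, c2 i = g0 * c i := fun i => (Int.mul_ediv_cancel' (hg0dvd i)).symm
  have hrel : ∀ x : Zd d, intFn c2 x = g0 * intFn c x := by
    intro x
    rw [intFn_apply, intFn_apply, Finset.mul_sum]
    exact Finset.sum_congr rfl fun i _ => by rw [hc2eq i]; ring
  have hrelR : ∀ v : Fin d → ℝ, realFn c2 v = (g0 : ℝ) * realFn c v := by
    intro v
    show (∑ i, ((c2 i : ℤ) : ℝ) * v i) = (g0:ℝ) * ∑ i, ((c i : ℤ) : ℝ) * v i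
    rw [Finset.mul_sum]
    refine Finset.sum_congr rfl fun i _ => ?_
    rw [hc2eq i]
    push_cast
    ring
  set F : Zd d →+ ℤ := intFn c with hFdef
  have hFZ : ∀ a ∈ Zset, F a = 0 := by
    intro a ha
    have := hrel a
    rw [hc2Z a ha] at this
    exact (mul_eq_zero.1 this.symm).resolve_left hg0ne
  have hgcd1 : Finset.univ.gcd c = 1 := by
    have h1 : Finset.univ.gcd c2 = g0 * Finset.univ.gcd c := by
      have h2 : Finset.univ.gcd c2 = Finset.univ.gcd (fun i => g0 * c i) := by
        congr 1
        funext i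
        exact hc2eq i
      rw [h2, Finset.gcd_mul_left]
      congr 1
      exact Int.normalize_of_nonneg hg0pos.le
    have h3 : g0 * 1 = g0 * Finset.univ.gcd c := by rw [mul_one, ← h1, hg0def]
    exact (mul_left_cancel₀ hg0ne h3).symm
  -- surjectivity
  have hsurj : Surjective F := by
    obtain ⟨z, hz⟩ := Int.subgroup_cyclic (AddMonoidHom.range F)
    have hzdvd : ∀ i, z ∣ c i := by
      intro i
      have hmem : c i ∈ AddMonoidHom.range F := by
        refine ⟨Pi.single i 1, ?_⟩
        rw [hFdef, intFn_apply, Finset.sum_eq_single i]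
        · simp
        · intro j _ hj
          simp [Pi.single_apply, hj]
        · simp
      rw [hz, AddSubgroup.mem_closure_singleton] at hmem
      obtain ⟨n, hn⟩ := hmem
      exact ⟨n, by rw [← hn, smul_eq_mul]; ring⟩
    have hz1 : z ∣ 1 := hgcd1 ▸ Finset.dvd_gcd fun i _ => hzdvd i
    intro m
    have hmem : m ∈ AddMonoidHom.range F := by
      rw [hz, AddSubgroup.mem_closure_singleton]
      obtain ⟨u, hu⟩ := hz1.trans (one_dvd m)
      exact ⟨u, by rw [smul_eq_mul, hu]; ring⟩
    exact AddMonoidHom.mem_range.1 hmem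
  clear_value g0
  -- key identity
  have hkerF : LinearMap.ker (realFn c) = zspan A e := by
    have hne : realFn c ≠ 0 := by
      intro h0
      have hci₀ : c i₀ ≠ 0 := by
        intro hc0
        apply hc2i₀
        rw [hc2eq i₀, hc0, mul_zero]
      have := realFn_single c i₀
      rw [h0] at this
      simp only [LinearMap.zero_apply] at this
      exact hci₀ (by exact_mod_cast this.symm)
    have hle : zspan A e ≤ LinearMap.ker (realFn c) := by
      rw [zspan, Submodule.span_le]
      rintro - ⟨a, ha, rfl⟩
      rw [SetLike.mem_coe, LinearMap.mem_ker, realFn_toR, hFZ a ha, Int.cast_zero]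
    exact (Submodule.eq_of_le_of_finrank_le hle (by rw [he4, finrank_ker _ hne])).symm
  have hrpos : 0 < realFn c (toR a₀) := by
    have h1 := hrelR (toR a₀)
    have hg0R : (0:ℝ) < (g0 : ℝ) := by exact_mod_cast hg0pos
    nlinarith [hc2a₀]
  have hsuptop : zspan A e ⊔ Submodule.span ℝ {toR a₀} = ⊤ := by
    have hlt : zspan A e < zspan A e ⊔ Submodule.span ℝ {toR a₀} := by
      refine lt_of_le_of_ne le_sup_left ?_
      intro heq
      apply ha₀notin
      rw [heq]
      exact le_sup_right (α := Submodule ℝ (Fin d → ℝ)) (Submodule.mem_span_singleton_self _)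
    have h1 : d - 1 < Module.finrank ℝ (zspan A e ⊔ Submodule.span ℝ {toR a₀} :
        Submodule ℝ (Fin d → ℝ)) := he4 ▸ Submodule.finrank_lt_finrank_of_lt hlt
    apply Submodule.eq_top_of_finrank_eq
    have h2 : Module.finrank ℝ (Fin d → ℝ) = d := by simp
    have h3 := Submodule.finrank_le (zspan A e ⊔ Submodule.span ℝ {toR a₀})
    omega
  have hident : ∀ v : Fin d → ℝ,
      e (toR a₀) * realFn c v = realFn c (toR a₀) * e v := by
    set θ : (Fin d → ℝ) →ₗ[ℝ] ℝ := e (toR a₀) • realFn c - realFn c (toR a₀) • e with hθ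
    have hθvan : ∀ v ∈ (zspan A e ⊔ Submodule.span ℝ {toR a₀} : Submodule ℝ (Fin d → ℝ)),
        θ v = 0 := by
      intro v hv
      have hsub : (zspan A e ⊔ Submodule.span ℝ {toR a₀} : Submodule ℝ (Fin d → ℝ)) ≤
          LinearMap.ker θ := by
        refine sup_le ?_ ?_
        · intro w hw
          have h1 : realFn c w = 0 := by
            have := hkerF ▸ hw
            rwa [LinearMap.mem_ker] at this
          have h2 : e w = 0 := by
            have := hkere ▸ hw
            rwa [LinearMap.mem_ker] at this
          rw [LinearMap.mem_ker, hθ]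
          simp [h1, h2]
        · rw [Submodule.span_le, Set.singleton_subset_iff]
          rw [SetLike.mem_coe, LinearMap.mem_ker, hθ]
          simp
          ring
      have := hsub hv
      rwa [LinearMap.mem_ker] at this
    intro v
    have hv : v ∈ (zspan A e ⊔ Submodule.span ℝ {toR a₀} : Submodule ℝ (Fin d → ℝ)) :=
      hsuptop ▸ Submodule.mem_top
    have := hθvan v hv
    rw [hθ] at this
    simp only [LinearMap.sub_apply, LinearMap.smul_apply, smul_eq_mul] at this
    linarith
  have hFval : ∀ a : Zd d, e (toR a₀) * ((F a : ℤ) : ℝ) = realFn c (toR a₀) * e (toR a) := by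
    intro a
    have := hident (toR a)
    rwa [realFn_toR] at this
  have hFnonneg : ∀ a ∈ A, 0 ≤ F a := by
    intro a ha
    have h1 := hFval a
    have h2 : 0 ≤ realFn c (toR a₀) * e (toR a) := mul_nonneg hrpos.le (he1 a ha)
    have h3 : 0 ≤ ((F a : ℤ) : ℝ) := by
      by_contra hneg
      push_neg at hneg
      have hneg2 : e (toR a₀) * ((F a : ℤ) : ℝ) < 0 := mul_neg_of_pos_of_neg he2 hneg
      linarith
    exact_mod_cast h3
  have hFiff : ∀ a : Zd d, (F a = 0 ↔ e (toR a) = 0) := by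
    intro a
    have h1 := hFval a
    constructor
    · intro h0
      rw [h0] at h1
      simp only [Int.cast_zero, mul_zero] at h1
      have := h1.symm
      rcases mul_eq_zero.1 this with h | h
      · exact absurd h (ne_of_gt hrpos)
      · exact h
    · intro h0
      rw [h0, mul_zero] at h1
      rcases mul_eq_zero.1 h1 with h | h
      · exact absurd h (ne_of_gt he2)
      · exact_mod_cast h
  refine ⟨F, ⟨hFnonneg, hsurj, ?_⟩, ?_, ?_⟩
  · have hseteq : {a : Zd d | a ∈ A ∧ F a = 0} = Zset := by
      ext a
      simp only [Set.mem_setOf_eq, hZset]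
      exact and_congr_right fun _ => hFiff a
    rw [hseteq]
    have hzz : Submodule.span ℝ (toR '' Zset) = zspan A e := rfl
    rw [hzz]
    exact he4
  · intro a ha hGa
    apply hFZ
    refine ⟨ha, he3 a ha ?_⟩
    rw [hG, hGa, Int.cast_zero]
  · intro h0
    rw [hFiff a₀] at h0
    rw [h0] at he2
    exact lt_irrefl 0 he2

end Aux

/-- Lemma 3.3. With `M` chosen larger than
`max(F_σ(S_c)^c ∪ {F_σ(bᵢ)}) − min(F_σ(S_c) ∪ {F_σ(bᵢ)})` for all facets `σ`,
and a face `τ`, one has `S + N°°(τ) ⊆ S`, where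
`N°°(τ) = { a ∈ ℕ(A∩τ) : F_σ(a) ≥ M for all facets σ ⊉ τ }`. -/
theorem add_circ_mem {d m : ℕ} (A : Finset (Zd d)) (Sc S : Set (Zd d))
    (b : Fin m → Zd d) (Bf : Fin m → Finset (Zd d))
    (hset : Setting A Sc S b Bf)
    (M : ℤ)
    (hM : ∀ F : Zd d →+ ℤ, IsFacetFn A F →
      ∀ k : ℤ, (k ∉ F '' Sc ∨ ∃ i, k = F (b i)) →
      ∀ l : ℤ, (l ∈ F '' Sc ∨ ∃ i, l = F (b i)) → k - l < M)
    (Bτ : Finset (Zd d)) (hτ : IsFace A Bτ)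
    (s : Zd d) (hs : s ∈ S)
    (x : Zd d) (hx : x ∈ AddSubmonoid.closure (Bτ : Set (Zd d)))
    (hxF : ∀ F : Zd d →+ ℤ, IsFacetFn A F → ¬ Bτ ⊆ facetSet A F → M ≤ F x) :
    s + x ∈ S := by
  classical
  obtain ⟨GT, hBτA, hGTpos, hGTiff⟩ := hτ
  have hsS := hs
  rw [hset.expr] at hsS
  obtain ⟨hsSc, hsNot⟩ := hsS
  have hxNA : x ∈ NA A := by
    have hle : AddSubmonoid.closure (Bτ : Set (Zd d)) ≤ NA A := by
      apply AddSubmonoid.closure_le.2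
      intro a ha
      exact AddSubmonoid.subset_closure (hBτA ha)
    exact hle hx
  have hsxSc : s + x ∈ Sc := hset.fg.1 s hsSc x hxNA
  rw [hset.expr]
  refine ⟨hsxSc, ?_⟩
  intro hmem
  rw [Set.mem_iUnion] at hmem
  obtain ⟨i, hi⟩ := hmem
  have hi' : s + x - b i ∈ AddSubgroup.closure ((Bf i : Set (Zd d))) := hi
  obtain ⟨Gi, hBfA, hGipos, hGiiff⟩ := hset.face i
  by_cases hsub : ∀ a ∈ Bτ, a ∈ Bf i
  · have hxZ : x ∈ AddSubgroup.closure ((Bf i : Set (Zd d))) := by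
      have h1 : AddSubmonoid.closure (Bτ : Set (Zd d)) ≤
          (AddSubgroup.closure ((Bf i : Set (Zd d)))).toAddSubmonoid := by
        apply AddSubmonoid.closure_le.2
        intro a ha
        exact AddSubgroup.subset_closure (hsub a ha)
      exact h1 hx
    apply hsNot
    rw [Set.mem_iUnion]
    refine ⟨i, ?_⟩
    show s - b i ∈ AddSubgroup.closure ((Bf i : Set (Zd d)))
    have heq : s - b i = (s + x - b i) - x := by abel
    rw [heq]
    exact AddSubgroup.sub_mem _ hi' hxZ
  · push_neg at hsub
    obtain ⟨a₀, ha₀Bτ, ha₀nBf⟩ := hsub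
    have ha₀A : a₀ ∈ A := hBτA ha₀Bτ
    have hGa₀ : Gi a₀ ≠ 0 := fun h0 => ha₀nBf ((hGiiff a₀ ha₀A).1 h0)
    obtain ⟨F, hFfacet, hFvan, hFa₀⟩ := exists_facetFn A hset.latt Gi hGipos a₀ ha₀A hGa₀
    have hnsub : ¬ Bτ ⊆ facetSet A F := by
      intro hc
      apply hFa₀
      have := hc ha₀Bτ
      rw [facetSet, Finset.mem_filter] at this
      exact this.2
    have hMx : M ≤ F x := hxF F hFfacet hnsub
    have hFz : F (s + x - b i) = 0 := by
      have hvan : ∀ z ∈ AddSubgroup.closure ((Bf i : Set (Zd d))), F z = 0 := by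
        intro z hz
        induction hz using AddSubgroup.closure_induction with
        | mem a ha =>
          have haBf : a ∈ Bf i := ha
          exact hFvan a (hBfA haBf) ((hGiiff a (hBfA haBf)).2 haBf)
        | zero => exact map_zero F
        | add y z _ _ hy hz => rw [map_add, hy, hz, add_zero]
        | neg y _ hy => rw [map_neg, hy, neg_zero]
      exact hvan _ hi'
    have hFs : F s + F x = F (b i) := by
      rw [map_sub, map_add] at hFz
      omega
    have hlt := hM F hFfacet (F (b i)) (Or.inr ⟨i, rfl⟩) (F s) (Or.inl ⟨s, hsSc, rfl⟩)
    omega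

end SaitoTakahashi
end
end

section
/- In the setting of the previous statement (S = S_c \ ⋃_{i=1}^m (b_i + ℤ(A∩τ_i)) with F_σ(S) = F_σ(S_c) for all facets), for any d ∈ ℤ^d and any index i: (d + S) ∩ S_c ∩ (b_i + ℤ(A∩τ_i)) ≠ ∅ if and only if b_i − d ∈ S + ℤ(A∩τ_i). -/
open Function

noncomputable section

namespace SaitoTakahashi


private lemma exists_sub_of_mem_closure {d : ℕ} {B : Finset (Zd d)} {z : Zd d}
    (hz : z ∈ AddSubgroup.closure (B : Set (Zd d))) :
    ∃ p ∈ AddSubmonoid.closure (B : Set (Zd d)),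
      ∃ q ∈ AddSubmonoid.closure (B : Set (Zd d)), z = p - q := by
  induction hz using AddSubgroup.closure_induction with
  | mem x hx => exact ⟨x, AddSubmonoid.subset_closure hx, 0, zero_mem _, by simp⟩
  | zero => exact ⟨0, zero_mem _, 0, zero_mem _, by simp⟩
  | add a b ha hb iha ihb =>
      obtain ⟨p1, hp1, q1, hq1, rfl⟩ := iha
      obtain ⟨p2, hp2, q2, hq2, rfl⟩ := ihb
      exact ⟨p1 + p2, add_mem hp1 hp2, q1 + q2, add_mem hq1 hq2, by abel⟩
  | neg a ha iha =>
      obtain ⟨p, hp, q, hq, rfl⟩ := iha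
      exact ⟨q, hq, p, hp, by abel⟩

private lemma coset_line_pigeonhole {d m : ℕ} (c : Fin m → Zd d)
    (K : Fin m → AddSubgroup (Zd d))
    (x w : Zd d) (h : ∀ n : ℕ, 0 < n → ∃ j, x + n • w - c j ∈ K j) :
    ∃ j, x - c j ∈ K j := by
  classical
  set k : Fin m → ℕ := fun j =>
    if hj : ∃ kk : ℕ, 0 < kk ∧ kk • w ∈ K j then hj.choose else 1 with hk
  have hkpos : ∀ j, 0 < k j := by
    intro j
    simp only [hk]
    split
    · next hj => exact hj.choose_spec.1
    · exact one_pos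
  set N : ℕ := ∏ j : Fin m, k j with hNdef
  have hNpos : 0 < N := Finset.prod_pos fun j _ => hkpos j
  have hNmem : ∀ j, (∃ kk : ℕ, 0 < kk ∧ kk • w ∈ K j) → N • w ∈ K j := by
    intro j hj
    have hkj : k j • w ∈ K j := by
      simp only [hk]
      rw [dif_pos hj]
      exact hj.choose_spec.2
    obtain ⟨cc, hcc⟩ : k j ∣ N := Finset.dvd_prod_of_mem k (Finset.mem_univ j)
    have he : cc • (k j • w) = N • w := by rw [smul_smul, mul_comm, ← hcc]
    exact he ▸ AddSubgroup.nsmul_mem _ hkj cc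
  have aux : ∀ a b : Fin (m + 1), b.1 < a.1 →
      (∀ j, x + ((a.1 + 1) * N) • w - c j ∈ K j → x + ((b.1 + 1) * N) • w - c j ∈ K j →
        x - c j ∈ K j) := by
    intro a b hba j h1 h2
    have hM : (a.1 + 1) * N = (b.1 + 1) * N + (a.1 - b.1) * N := by
      have : a.1 + 1 = (b.1 + 1) + (a.1 - b.1) := by omega
      rw [this, add_mul]
    have hD : ((a.1 - b.1) * N) • w ∈ K j := by
      have he : ((a.1 - b.1) * N) • w =
          (x + ((a.1 + 1) * N) • w - c j) - (x + ((b.1 + 1) * N) • w - c j) := by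
        rw [hM, add_nsmul]; abel
      rw [he]
      exact sub_mem h1 h2
    have hNw : N • w ∈ K j := hNmem j ⟨(a.1 - b.1) * N, Nat.mul_pos (by omega) hNpos, hD⟩
    have hM2 : ((b.1 + 1) * N) • w ∈ K j := by
      have he : (b.1 + 1) • (N • w) = ((b.1 + 1) * N) • w := smul_smul _ _ _
      exact he ▸ AddSubgroup.nsmul_mem _ hNw _
    have he : x - c j = (x + ((b.1 + 1) * N) • w - c j) - ((b.1 + 1) * N) • w := by abel
    rw [he]
    exact sub_mem h2 hM2
  have hall : ∀ t : Fin (m + 1), ∃ j, x + ((t.1 + 1) * N) • w - c j ∈ K j := by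
    intro t
    exact h ((t.1 + 1) * N) (by positivity)
  choose f hf using hall
  obtain ⟨t1, t2, hne, heq⟩ := Fintype.exists_ne_map_eq_of_card_lt f (by simp)
  rcases (Fin.val_ne_iff.mpr hne).lt_or_gt with hlt | hlt
  · exact ⟨f t1, aux t2 t1 hlt (f t1) (heq ▸ hf t2) (hf t1)⟩
  · exact ⟨f t1, aux t1 t2 hlt (f t1) (hf t1) (heq ▸ hf t2)⟩

/-- Lemma 3.4. `(d₀ + S) ∩ S_c ∩ (bᵢ + ℤ(A∩τᵢ)) ≠ ∅` if and
only if `bᵢ − d₀ ∈ S + ℤ(A∩τᵢ)`. -/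
theorem three_way_intersection {d m : ℕ} (A : Finset (Zd d)) (Sc S : Set (Zd d))
    (b : Fin m → Zd d) (Bf : Fin m → Finset (Zd d))
    (hset : Setting A Sc S b Bf)
    (d0 : Zd d) (i : Fin m) :
    ({ x | ∃ y ∈ S, x = d0 + y } ∩ Sc ∩ coset (b i) (Bf i)).Nonempty ↔
      b i - d0 ∈ plusZ S (Bf i) := by
  constructor
  · rintro ⟨x, ⟨⟨y, hy, rfl⟩, hxSc⟩, hxco⟩
    have hco : b i - (d0 + y) ∈ AddSubgroup.closure ((Bf i : Set (Zd d))) := by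
      have hxco' : (d0 + y) - b i ∈ AddSubgroup.closure ((Bf i : Set (Zd d))) := hxco
      have := neg_mem hxco'
      rwa [neg_sub] at this
    exact ⟨y, hy, b i - (d0 + y), hco, by abel⟩
  · rintro ⟨s, hs, z, hz, hbz⟩
    obtain ⟨p, hp, q, hq, hpq⟩ := exists_sub_of_mem_closure hz
    have hsS := hs
    rw [hset.expr] at hsS
    obtain ⟨G, hBA, -, -⟩ := hset.face i
    have hMsub : AddSubmonoid.closure ((Bf i : Set (Zd d))) ≤ NA A :=
      AddSubmonoid.closure_mono (Finset.coe_subset.mpr hBA)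
    have hMG : AddSubmonoid.closure ((Bf i : Set (Zd d))) ≤
        (AddSubgroup.closure ((Bf i : Set (Zd d)))).toAddSubmonoid :=
      AddSubmonoid.closure_le.mpr AddSubgroup.subset_closure
    have key : ∃ n : ℕ, 0 < n ∧ s + n • (p + q) ∉ ⋃ j, coset (b j) (Bf j) := by
      by_contra hcon
      push_neg at hcon
      have hline : ∀ n : ℕ, 0 < n →
          ∃ j, s + n • (p + q) - b j ∈ AddSubgroup.closure ((Bf j : Set (Zd d))) := by
        intro n hn
        obtain ⟨U, ⟨j, rfl⟩, hU⟩ := hcon n hn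
        exact ⟨j, hU⟩
      obtain ⟨j, hj⟩ := coset_line_pigeonhole b
        (fun j => AddSubgroup.closure ((Bf j : Set (Zd d)))) s (p + q) hline
      exact hsS.2 (Set.mem_iUnion.mpr ⟨j, hj⟩)
    obtain ⟨n, hn, hnotin⟩ := key
    obtain ⟨n', rfl⟩ : ∃ n', n = n' + 1 := ⟨n - 1, by omega⟩
    set v : Zd d := (n' + 1) • (p + q) with hv
    set r : Zd d := n' • (p + q) + q + q with hrdef
    have hvr : v - z = r := by
      rw [hv, hrdef, hpq, succ_nsmul]
      abel
    have hr_mem : r ∈ AddSubmonoid.closure ((Bf i : Set (Zd d))) :=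
      add_mem (add_mem (AddSubmonoid.nsmul_mem _ (add_mem hp hq) n') hq) hq
    have hv_mem : v ∈ AddSubmonoid.closure ((Bf i : Set (Zd d))) :=
      AddSubmonoid.nsmul_mem _ (add_mem hp hq) _
    have hsv : s + v ∈ S := by
      rw [hset.expr]
      exact ⟨hset.fg.1 s hsS.1 v (hMsub hv_mem), hnotin⟩
    have hxb : d0 + (s + v) = b i + r := by
      have hb : b i = d0 + (s + z) := by rw [← hbz]; abel
      rw [hb, ← hvr]
      abel
    refine ⟨d0 + (s + v), ⟨⟨⟨s + v, hsv, rfl⟩, ?_⟩, ?_⟩⟩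
    · rw [hxb]
      exact hset.fg.1 (b i) (hset.bIn i) r (hMsub hr_mem)
    · show d0 + (s + v) - b i ∈ AddSubgroup.closure ((Bf i : Set (Zd d)))
      have : d0 + (s + v) - b i = r := by rw [hxb]; abel
      rw [this]
      exact hMG hr_mem


end SaitoTakahashi
end
end

section
/- With S and E(S)_τ as above, for any α ∈ K^d, the coset α + ℤ^d has only finitely many equivalence classes with respect to the relation ∼_{S,τ}, where β ∼_{S,τ} γ iff E(S)_{τ'}(β) = E(S)_{τ'}(γ) for all faces τ' ⊇ τ. -/
open Function

noncomputable section

namespace SaitoTakahashiProof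

open SaitoTakahashi

variable {d : ℕ}

/-- `toK` as an additive monoid hom. -/
def tKhom (K : Type) [Field K] : Zd d →+ (Fin d → K) where
  toFun := toK K
  map_zero' := by funext i; simp [toK]
  map_add' a b := by funext i; simp [toK]

/-- `toK` as a `ℤ`-linear map. -/
def tK (K : Type) [Field K] : Zd d →ₗ[ℤ] (Fin d → K) := (tKhom K).toIntLinearMap

lemma tK_apply (K : Type) [Field K] (a : Zd d) : tK K a = toK K a := rfl

lemma toK_sub (K : Type) [Field K] (a b : Zd d) :
    toK K (a - b) = toK K a - toK K b := map_sub (tKhom K) a b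

lemma toK_add (K : Type) [Field K] (a b : Zd d) :
    toK K (a + b) = toK K a + toK K b := map_add (tKhom K) a b

lemma toK_inj (K : Type) [Field K] [CharZero K] :
    Function.Injective (toK K (d := d)) := by
  intro a b h
  funext i
  have h2 : ((a i : ℤ) : K) = ((b i : ℤ) : K) := congrFun h i
  exact_mod_cast h2

lemma mem_closure_iff_span (s : Set (Zd d)) (x : Zd d) :
    x ∈ AddSubgroup.closure s ↔ x ∈ Submodule.span ℤ s := by
  constructor
  · intro h
    have : AddSubgroup.closure s ≤ (Submodule.span ℤ s).toAddSubgroup :=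
      AddSubgroup.closure_le _ |>.2 Submodule.subset_span
    exact this h
  · intro h
    have : Submodule.span ℤ s ≤ AddSubgroup.toIntSubmodule (AddSubgroup.closure s) :=
      Submodule.span_le.2 AddSubgroup.subset_closure
    exact this h

section A

variable (K : Type) [Field K] [CharZero K]

lemma exists_pi : ∃ π : K →ₗ[ℚ] ℚ, π 1 = 1 := by
  have h1 : LinearIndepOn ℚ id ({1} : Set K) :=
    LinearIndepOn.singleton one_ne_zero
  let b := Module.Basis.extend h1
  have hmem : (1 : K) ∈ h1.extend (Set.subset_univ _) :=
    h1.subset_extend _ rfl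
  refine ⟨b.coord ⟨1, hmem⟩, ?_⟩
  have hb : (1 : K) = b ⟨1, hmem⟩ := (Module.Basis.extend_apply_self h1 ⟨1, hmem⟩).symm
  rw [show (b.coord ⟨1, hmem⟩) 1 = (b.coord ⟨1, hmem⟩) (b ⟨1, hmem⟩) from congrArg _ hb,
    Module.Basis.coord_apply, Module.Basis.repr_self]
  simp

lemma lemA1 (B' : Finset (Zd d)) (w : Zd d)
    (hw : toK K w ∈ spanK K B') : toK ℚ w ∈ spanK ℚ B' := by
  obtain ⟨π, hπ⟩ := exists_pi K
  rw [spanK, Submodule.mem_span_set'] at hw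
  obtain ⟨n, f, g, hfg⟩ := hw
  have hb : ∀ i : Fin n, ∃ bi : Zd d, bi ∈ (B' : Set (Zd d)) ∧ toK K bi = (g i : Fin d → K) :=
    fun i => (g i).2
  choose bi hbiB hbiK using hb
  rw [spanK, Submodule.mem_span_set']
  refine ⟨n, fun i => π (f i), fun i => ⟨toK ℚ (bi i), Set.mem_image_of_mem _ (hbiB i)⟩, ?_⟩
  funext j
  have hj : (∑ i, f i • (g i : Fin d → K)) j = ((w j : ℤ) : K) := by
    rw [hfg]; rfl
  have hj' : (∑ i, f i * ((bi i j : ℤ) : K)) = ((w j : ℤ) : K) := by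
    rw [← hj, Finset.sum_apply]
    refine Finset.sum_congr rfl fun i _ => ?_
    rw [← hbiK i]
    rfl
  -- apply π
  have key : ∀ (c : ℤ) (x : K), π (x * (c : K)) = (c : ℚ) * π x := by
    intro c x
    have h1 : x * (c : K) = ((c : ℚ)) • x := by
      rw [Rat.smul_def]
      push_cast
      ring
    rw [h1, map_smul, smul_eq_mul]
  have hcast : ∀ c : ℤ, π ((c : ℤ) : K) = (c : ℚ) := by
    intro c
    have h1 : ((c : ℤ) : K) = ((c : ℚ)) • (1 : K) := by
      rw [Rat.smul_one_eq_cast]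
      push_cast
      ring
    rw [h1, map_smul, smul_eq_mul, hπ, mul_one]
  have := congrArg π hj'
  rw [map_sum, hcast] at this
  calc (∑ i, π (f i) • (fun k => ((bi i k : ℤ) : ℚ))) j
      = ∑ i, π (f i) * ((bi i j : ℤ) : ℚ) := by rw [Finset.sum_apply]; rfl
    _ = ∑ i, π (f i * ((bi i j : ℤ) : K)) := by
        refine Finset.sum_congr rfl fun i _ => ?_
        rw [key, mul_comm]
    _ = ((w j : ℤ) : ℚ) := this
    _ = toK ℚ w j := rfl

lemma lemA2 (B' : Finset (Zd d)) (w : Zd d)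
    (hw : toK ℚ w ∈ spanK ℚ B') :
    ∃ n : ℤ, n ≠ 0 ∧ n • w ∈ Submodule.span ℤ (B' : Set (Zd d)) := by
  set M : Submodule ℤ (Fin d → ℚ) := Submodule.span ℤ (toK ℚ '' (B' : Set (Zd d))) with hM
  have hsmul : ∀ (n : ℤ) (x : Fin d → ℚ), (n : ℚ) • x = n • x := fun n x =>
    Int.cast_smul_eq_zsmul ℚ n x
  let W : Submodule ℚ (Fin d → ℚ) :=
    { carrier := {x | ∃ n : ℤ, n ≠ 0 ∧ n • x ∈ M}
      add_mem' := by
        rintro x y ⟨n, hn, hnx⟩ ⟨m, hm, hmy⟩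
        refine ⟨n * m, mul_ne_zero hn hm, ?_⟩
        have : (n * m) • (x + y) = m • (n • x) + n • (m • y) := by
          rw [smul_add]
          congr 1
          · rw [mul_comm, mul_smul]
          · rw [mul_smul]
        rw [this]
        exact M.add_mem (M.smul_mem m hnx) (M.smul_mem n hmy)
      zero_mem' := ⟨1, one_ne_zero, by simpa using M.zero_mem⟩
      smul_mem' := by
        rintro q x ⟨n, hn, hnx⟩
        refine ⟨n * (q.den : ℤ), mul_ne_zero hn (by exact_mod_cast q.den_nz), ?_⟩
        have : (n * (q.den : ℤ)) • (q • x) = q.num • (n • x) := by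
          rw [← hsmul n x, ← hsmul, ← hsmul q.num, smul_smul, smul_smul]
          congr 1
          push_cast
          rw [mul_assoc, mul_comm ((q.den : ℚ)) q, Rat.mul_den_eq_num]
          ring
        rw [this]
        exact M.smul_mem _ hnx }
  have hle : spanK ℚ B' ≤ W := by
    rw [spanK]
    refine Submodule.span_le.2 ?_
    rintro x hx
    exact ⟨1, one_ne_zero, by simpa using Submodule.subset_span hx⟩
  obtain ⟨n, hn, hnw⟩ := hle hw
  refine ⟨n, hn, ?_⟩
  have hmap : M = Submodule.map (tK ℚ) (Submodule.span ℤ (B' : Set (Zd d))) := by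
    rw [hM, Submodule.map_span]
    rfl
  rw [hmap] at hnw
  have hnw' : tK ℚ (n • w) ∈ Submodule.map (tK ℚ) (Submodule.span ℤ (B' : Set (Zd d))) := by
    rwa [map_smul]
  obtain ⟨y, hy, hyw⟩ := hnw'
  have : y = n • w := toK_inj ℚ hyw
  rwa [← this]

lemma lemA (B' : Finset (Zd d)) (w : Zd d)
    (hw : toK K w ∈ spanK K B') :
    ∃ n : ℤ, n ≠ 0 ∧ n • w ∈ Submodule.span ℤ (B' : Set (Zd d)) :=
  lemA2 B' w (lemA1 K B' w hw)

end A

section B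

variable (K : Type) [Field K] [CharZero K]

lemma lemB (S : Set (Zd d)) (α : Fin d → K) (B' : Finset (Zd d)) :
    ∃ (Q : Type) (_ : Finite Q) (φ : Zd d → Set Q),
      ∀ c c', φ c = φ c' →
        {lam | memE K S B' (α + toK K c) lam} = {lam | memE K S B' (α + toK K c') lam} := by
  classical
  by_cases hT : ∃ w0 : Zd d, α + toK K w0 ∈ spanK K B'
  · obtain ⟨w0, hw0⟩ := hT
    set Ls : Submodule ℤ (Zd d) :=
      Submodule.comap (tK K) ((spanK K B').restrictScalars ℤ) with hLs
    set Ms : Submodule ℤ (Zd d) := Submodule.span ℤ (B' : Set (Zd d)) with hMs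
    set M' : Submodule ℤ Ls := Ms.comap Ls.subtype with hM'
    have hLsmem : ∀ l : Ls, toK K (l : Zd d) ∈ spanK K B' := fun l => l.2
    haveI hLfin : Module.Finite ℤ Ls := Module.Finite.iff_fg.2 (IsNoetherian.noetherian Ls)
    haveI : Module.Finite ℤ (Ls ⧸ M') := Module.Finite.quotient ℤ M'
    have htor : Module.IsTorsion ℤ (Ls ⧸ M') := by
      intro x
      obtain ⟨l, rfl⟩ := Submodule.Quotient.mk_surjective M' x
      obtain ⟨n, hn, hnl⟩ := lemA K B' (l : Zd d) (hLsmem l)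
      refine ⟨⟨n, mem_nonZeroDivisors_of_ne_zero hn⟩, ?_⟩
      rw [Submonoid.mk_smul, ← Submodule.Quotient.mk_smul, Submodule.Quotient.mk_eq_zero]
      show ((n • l : Ls) : Zd d) ∈ Ms
      exact hnl
    haveI hQfin : Finite (Ls ⧸ M') := Module.finite_of_fg_torsion _ htor
    set φ : Zd d → Set (Ls ⧸ M') := fun c =>
      Submodule.Quotient.mk '' {l : Ls | ∃ s ∈ S, ∃ z ∈ AddSubgroup.closure (B' : Set (Zd d)),
        (c - w0) - (l : Zd d) = s + z} with hφ
    refine ⟨Ls ⧸ M', hQfin, φ, ?_⟩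
    have key : ∀ c, {lam | memE K S B' (α + toK K c) lam} =
        {lam | ∃ l : Ls, Submodule.Quotient.mk l ∈ φ c ∧
          lam = α + toK K w0 + toK K (l : Zd d)} := by
      intro c
      ext lam
      constructor
      · rintro ⟨hspan, s, hs, z, hz, heq⟩
        have hlam : lam = α + toK K c - toK K s - toK K z := by
          have : α + toK K c - lam = toK K s + toK K z := heq
          linear_combination (norm := abel) -this
        set l0 : Zd d := c - s - z - w0 with hl0
        have hl0K : toK K l0 = lam - (α + toK K w0) := by
          rw [hlam, hl0]
          simp only [toK_sub]
          abel
        have hl0mem : l0 ∈ Ls := by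
          show toK K l0 ∈ (spanK K B' : Submodule K (Fin d → K))
          rw [hl0K]
          exact Submodule.sub_mem _ hspan hw0
        refine ⟨⟨l0, hl0mem⟩, ?_, ?_⟩
        · refine Set.mem_image_of_mem _ ?_
          refine ⟨s, hs, z, hz, ?_⟩
          show (c - w0) - l0 = s + z
          rw [hl0]
          abel
        · rw [hl0K]
          abel
      · rintro ⟨l, hmem, rfl⟩
        obtain ⟨l', ⟨s, hs, z, hz, heq'⟩, hmk⟩ := hmem
        have hdiff : (l' : Zd d) - (l : Zd d) ∈ AddSubgroup.closure (B' : Set (Zd d)) := by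
          rw [mem_closure_iff_span]
          have : l' - l ∈ M' := (Submodule.Quotient.eq M').1 hmk
          exact this
        refine ⟨Submodule.add_mem _ hw0 (hLsmem l), s, hs,
          z + ((l' : Zd d) - (l : Zd d)), AddSubgroup.add_mem _ hz hdiff, ?_⟩
        have harg : c - w0 - (l : Zd d) = s + (z + ((l' : Zd d) - (l : Zd d))) := by
          have : (c - w0) - (l' : Zd d) = s + z := heq'
          linear_combination (norm := abel) this
        have h3 := congrArg (toK K) harg
        simp only [toK_sub, toK_add] at h3
        show α + toK K c - (α + toK K w0 + toK K (l : Zd d)) =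
          toK K s + toK K (z + ((l' : Zd d) - (l : Zd d)))
        simp only [toK_sub, toK_add]
        linear_combination (norm := abel) h3
    intro c c' h
    rw [key, key, h]
  · refine ⟨PUnit, inferInstance, fun _ => ∅, fun c c' _ => ?_⟩
    have hempty : ∀ c'', {lam | memE K S B' (α + toK K c'') lam} = (∅ : Set (Fin d → K)) := by
      intro c''
      ext lam
      simp only [Set.mem_empty_iff_false, iff_false, Set.mem_setOf_eq]
      rintro ⟨hspan, s, hs, z, hz, heq⟩
      refine hT ⟨c'' - s - z, ?_⟩
      have hlam : α + toK K (c'' - s - z) = lam := by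
        simp only [toK_sub]
        have h4 : α + toK K c'' - lam = toK K s + toK K z := heq
        linear_combination (norm := abel) h4
      rw [hlam]
      exact hspan
    rw [hempty, hempty]

end B

end SaitoTakahashiProof

namespace SaitoTakahashi

open SaitoTakahashiProof

/-- Lemma 4.6. For any `α ∈ K^d`, the coset `α + ℤ^d` has only
finitely many equivalence classes with respect to `∼_{S,τ}`, where
`β ∼_{S,τ} γ` iff `E(S)_{τ'}(β) = E(S)_{τ'}(γ)` for all faces `τ' ⊇ τ`. -/
theorem finitely_many_sim_classes {d m : ℕ}
    (K : Type) [Field K] [IsAlgClosed K] [CharZero K]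
    (A : Finset (Zd d)) (Sc S : Set (Zd d))
    (b : Fin m → Zd d) (Bf : Fin m → Finset (Zd d))
    (hset : Setting A Sc S b Bf)
    (Bτ : Finset (Zd d)) (hτ : IsFace A Bτ)
    (α : Fin d → K) :
    ∃ R : Set (Fin d → K), R.Finite ∧ (∀ β ∈ R, ∃ c : Zd d, β = α + toK K c) ∧
      ∀ c : Zd d, ∃ β ∈ R, ∀ B' : Finset (Zd d), IsFace A B' → Bτ ⊆ B' →
        ∀ lam, (memE K S B' (α + toK K c) lam ↔ memE K S B' β lam) := by
  classical
  choose Q hQ φ hφ using fun (B' : Finset (Zd d)) => lemB K S α B'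
  haveI : ∀ B', Finite (Q B') := hQ
  let Ψ : Zd d → ∀ B' : {x // x ∈ A.powerset}, Set (Q B'.1) := fun c B' => φ B'.1 c
  haveI : Finite (∀ B' : {x // x ∈ A.powerset}, Set (Q B'.1)) := by
    infer_instance
  let rep : (∀ B' : {x // x ∈ A.powerset}, Set (Q B'.1)) → Zd d := fun y =>
    if h : ∃ c, Ψ c = y then h.choose else 0
  refine ⟨(fun c => α + toK K c) '' (rep '' Set.range Ψ), ?_, ?_, ?_⟩
  · exact ((Set.toFinite (Set.range Ψ)).image _).image _
  · rintro β ⟨c, -, rfl⟩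
    exact ⟨c, rfl⟩
  · intro c
    refine ⟨α + toK K (rep (Ψ c)), ⟨rep (Ψ c), ⟨Ψ c, Set.mem_range_self c, rfl⟩, rfl⟩, ?_⟩
    intro B' hface hsub lam
    have hΨ : Ψ (rep (Ψ c)) = Ψ c := by
      have h : ∃ c', Ψ c' = Ψ c := ⟨c, rfl⟩
      show Ψ (if h' : ∃ c', Ψ c' = Ψ c then h'.choose else 0) = Ψ c
      rw [dif_pos h]
      exact h.choose_spec
    have hBA : B' ∈ A.powerset := Finset.mem_powerset.2 hface.choose_spec.1
    have hφeq : φ B' c = φ B' (rep (Ψ c)) := (congrFun hΨ ⟨B', hBA⟩).symm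
    have hsets := hφ B' c (rep (Ψ c)) hφeq
    exact Set.ext_iff.1 hsets lam



end SaitoTakahashi
end
end

section
/- With S as in situation (6), for any face τ: S + ℤ(A∩τ) = [S_c + ℤ(A∩τ)] \ ⋃_{τ_i ⊇ τ} (b_i + ℤ(A∩τ_i)). -/
open Function

noncomputable section

/-!
Translating by `ℤ(A∩τ)` cannot create or destroy membership in a coset `bᵢ + ℤ(A∩τᵢ)`
with `τᵢ ⊇ τ`, which gives `⊆`. For `⊇`, write `x = s + z` with `s ∈ S_c`, `z ∈ ℤ(A∩τ)`,
and push `s` deep into `τ` along `t = ∑ (A∩τ) ∈ ℕA`: the supporting functional `Gᵢ` of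
each face `τᵢ ⊉ τ` is positive on `t` but constant on `bᵢ + ℤ(A∩τᵢ)`, so `s + n t` avoids
all those cosets for `n ≫ 0`, while it stays in `S_c` and in the same cosets
`bᵢ + ℤ(A∩τᵢ)` with `τᵢ ⊇ τ` as `x`.
-/

namespace SaitoTakahashi

section

variable {M : Type*} [AddCommMonoid M]

theorem map_sum_pos {B : Finset M} (G : M →+ ℤ) (hnn : ∀ a ∈ B, 0 ≤ G a)
    (hpos : ∃ a ∈ B, 0 < G a) : 0 < G (∑ a ∈ B, a) := by
  rw [map_sum]
  exact Finset.sum_pos' hnn hpos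

theorem map_sum_pos_of_not_subset {A B B' : Finset M} {G : M →+ ℤ}
    (hnn : ∀ a ∈ A, 0 ≤ G a) (hzero : ∀ a ∈ A, (G a = 0 ↔ a ∈ B'))
    (hB : B ⊆ A) (hBB' : ¬ B ⊆ B') : 0 < G (∑ a ∈ B, a) := by
  obtain ⟨a, ha, haB'⟩ := Finset.not_subset.1 hBB'
  refine map_sum_pos G (fun a ha => hnn a (hB ha)) ⟨a, ha, ?_⟩
  exact lt_of_le_of_ne (hnn a (hB ha)) fun h => haB' ((hzero a (hB ha)).1 h.symm)

theorem exists_nsmul_forall_lt {ι : Type*} [Finite ι] (G : ι → M →+ ℤ) (c : ι → ℤ)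
    (x t : M) : ∃ n : ℕ, ∀ i, 0 < G i t → c i < G i (x + n • t) := by
  have hev : ∀ i, ∀ᶠ n : ℕ in Filter.atTop, 0 < G i t → c i < G i (x + n • t) := by
    intro i
    filter_upwards [Filter.eventually_gt_atTop (c i - G i x).toNat] with n hn ht
    rw [map_add, map_nsmul, nsmul_eq_mul]
    have hcn : c i - G i x < n := by have := Int.self_le_toNat (c i - G i x); omega
    nlinarith
  exact (Filter.eventually_all.2 hev).exists

end

section

variable {d : ℕ}

theorem add_mem_coset_iff {B : Finset (Zd d)} {b x z : Zd d}
    (hz : z ∈ AddSubgroup.closure (B : Set (Zd d))) :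
    x + z ∈ coset b B ↔ x ∈ coset b B := by
  show x + z - b ∈ AddSubgroup.closure (B : Set (Zd d)) ↔ x - b ∈ AddSubgroup.closure _
  rw [show x + z - b = x - b + z by abel]
  exact AddSubgroup.add_mem_cancel_right _ hz

theorem map_eq_of_mem_coset {B : Finset (Zd d)} {b x : Zd d} (G : Zd d →+ ℤ)
    (hG : ∀ a ∈ B, G a = 0) (hx : x ∈ coset b B) : G x = G b := by
  have hker : AddSubgroup.closure (B : Set (Zd d)) ≤ G.ker := (AddSubgroup.closure_le _).2 hG
  have := hker hx
  rwa [AddMonoidHom.mem_ker, map_sub, sub_eq_zero] at this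

variable {ι : Type*} {A B : Finset (Zd d)} {Sc S : Set (Zd d)} {b : ι → Zd d}
  {Bf : ι → Finset (Zd d)}

theorem plusZ_subset_diff (hS : S = Sc \ ⋃ i, coset (b i) (Bf i)) :
    plusZ S B ⊆ plusZ Sc B \ ⋃ i, ⋃ (_ : B ⊆ Bf i), coset (b i) (Bf i) := by
  rintro _ ⟨s, hs, z, hz, rfl⟩
  rw [hS] at hs
  refine ⟨⟨s, hs.1, z, hz, rfl⟩, ?_⟩
  simp only [Set.mem_iUnion, not_exists]
  intro i hBi hsz
  exact hs.2 (Set.mem_iUnion.2 ⟨i, (add_mem_coset_iff (AddSubgroup.closure_mono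
    (Finset.coe_subset.2 hBi) hz)).1 hsz⟩)

theorem diff_subset_plusZ [Finite ι] (hSc : IsNASet A Sc) (hface : ∀ i, IsFace A (Bf i))
    (hB : B ⊆ A) (hS : S = Sc \ ⋃ i, coset (b i) (Bf i)) :
    plusZ Sc B \ ⋃ i, ⋃ (_ : B ⊆ Bf i), coset (b i) (Bf i) ⊆ plusZ S B := by
  rintro _ ⟨⟨s, hs, z, hz, rfl⟩, hsz⟩
  choose G hBfA hGnn hGzero using hface
  set t := ∑ a ∈ B, a
  have htNA : t ∈ NA A :=
    AddSubmonoid.sum_mem _ fun a ha => AddSubmonoid.subset_closure (Finset.mem_coe.2 (hB ha))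
  have htZ : t ∈ AddSubgroup.closure (B : Set (Zd d)) :=
    AddSubgroup.sum_mem _ fun a ha => AddSubgroup.subset_closure (Finset.mem_coe.2 ha)
  obtain ⟨n, hn⟩ := exists_nsmul_forall_lt G (fun i => G i (b i)) s t
  refine ⟨s + n • t, ?_, z - n • t, sub_mem hz (nsmul_mem htZ n), by abel⟩
  rw [hS]
  refine ⟨hSc s hs _ (nsmul_mem htNA n), ?_⟩
  simp only [Set.mem_iUnion, not_exists]
  intro i hi
  by_cases hBi : B ⊆ Bf i
  · refine hsz (Set.mem_iUnion₂.2 ⟨i, hBi, ?_⟩)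
    rw [show s + z = s + n • t + (z - n • t) by abel]
    exact (add_mem_coset_iff (AddSubgroup.closure_mono (Finset.coe_subset.2 hBi)
      (sub_mem hz (nsmul_mem htZ n)))).2 hi
  · have hGt := map_sum_pos_of_not_subset (hGnn i) (hGzero i) hB hBi
    refine (hn i hGt).ne' (map_eq_of_mem_coset (G i) (fun a ha => ?_) hi)
    exact (hGzero i a (hBfA i ha)).2 ha

end

theorem plusZ_standard_expression_general {d m : ℕ}
    (A : Finset (Zd d)) (Sc S : Set (Zd d))
    (b : Fin m → Zd d) (Bf : Fin m → Finset (Zd d))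
    (hset : Setting A Sc S b Bf)
    (Bτ : Finset (Zd d)) (hτ : IsFace A Bτ) :
    plusZ S Bτ = plusZ Sc Bτ \ ⋃ i, ⋃ (_ : Bτ ⊆ Bf i), coset (b i) (Bf i) := by
  obtain ⟨_, hBτA, _⟩ := hτ
  exact (plusZ_subset_diff hset.expr).antisymm
    (diff_subset_plusZ hset.fg.1 hset.face hBτA hset.expr)

/-- Lemma 4.9. For any face `τ`:
`S + ℤ(A∩τ) = [S_c + ℤ(A∩τ)] \ ⋃_{τᵢ ⊇ τ} (bᵢ + ℤ(A∩τᵢ))`. -/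
theorem plusZ_standard_expression {d m : ℕ}
    (A : Finset (Zd d)) (Sc S : Set (Zd d))
    (b : Fin m → Zd d) (Bf : Fin m → Finset (Zd d))
    (hset : Setting A Sc S b Bf) (hirr : Irredundant Sc S b Bf)
    (Bτ : Finset (Zd d)) (hτ : IsFace A Bτ) :
    plusZ S Bτ = plusZ Sc Bτ \ ⋃ i, ⋃ (_ : Bτ ⊆ Bf i), coset (b i) (Bf i) :=
  plusZ_standard_expression_general A Sc S b Bf hset Bτ hτ

end SaitoTakahashi
end
end
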